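/- arXiv:1902.07765 — 4 statements merged into one kernel-verified Lean document; each statement's English description precedes it below -/
import Mathlib

section
/- Let {S(t)}_{t≥0} be a multivalued eventual semiflow on X. Assume that {S(t)} is (X,Y)-dissipative with bounded set B₀ ∈ B(Y) and that {S(t)} is Y-asymptotically compact on B₀. Then the ω-limit set ω_Y(B₀) is a compact subset of Y. -/
open Set Filter Topology Bornology ENNReal

/-- The image of a set `B` under the multivalued map `S t`:
`S(t)B = ⋃_{v ∈ B} S(t)v`. -/
def mImage {X : Type*} (S : ℝ → X → Set X) (t : ℝ) (B : Set X) : Set X :=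
  ⋃ v ∈ B, S t v

/-- `S` is a multivalued eventual semiflow on the metric space `X`:
the values `S t v` (for `t ≥ 0`) are nonempty, `S 0 v = {v}`, and for every
nonempty bounded `B ⊆ X` there is `t₁(B) ≥ 0` such that
`S(s+t)B ⊆ S(s)S(t)B` for all `t ≥ t₁(B)`, `s ≥ 0`. -/
def IsEventualSemiflow {X : Type*} [MetricSpace X] (S : ℝ → X → Set X) : Prop :=
  (∀ t : ℝ, 0 ≤ t → ∀ v : X, (S t v).Nonempty) ∧
  (∀ v : X, S 0 v = {v}) ∧
  (∀ B : Set X, B.Nonempty → IsBounded B →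
    ∃ t₁ : ℝ, 0 ≤ t₁ ∧ ∀ t ≥ t₁, ∀ s ≥ (0 : ℝ),
      mImage S (s + t) B ⊆ mImage S s (mImage S t B))

/-- `(X,Y)`-dissipativity: `ι : Y → X` is the (continuous, injective) identification of
`Y` with a subset of `X`, and `B₀ ⊆ Y` is such that every nonempty bounded `B ⊆ X` is
eventually absorbed: there is `t₀(B) ≥ 0` with `S(t)B ⊆ ι''B₀` for all `t ≥ t₀(B)`. -/
def IsDissipativeInto {X Y : Type*} [MetricSpace X] [MetricSpace Y]
    (S : ℝ → X → Set X) (ι : Y → X) (B₀ : Set Y) : Prop :=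
  ∀ B : Set X, B.Nonempty → IsBounded B →
    ∃ t₀ : ℝ, 0 ≤ t₀ ∧ ∀ t ≥ t₀, mImage S t B ⊆ ι '' B₀

/-- `Y`-asymptotic compactness on `B₀`: whenever `tₙ → ∞` and `vₙ ∈ S(tₙ)B₀`, the
sequence `(vₙ)` has a subsequence which lies in `Y` and converges in `Y`. -/
def IsAsympCompactOn {X Y : Type*} [MetricSpace X] [MetricSpace Y]
    (S : ℝ → X → Set X) (ι : Y → X) (B₀ : Set Y) : Prop :=
  ∀ t : ℕ → ℝ, Tendsto t atTop atTop →
    ∀ v : ℕ → X, (∀ n, v n ∈ mImage S (t n) (ι '' B₀)) →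
      ∃ φ : ℕ → ℕ, StrictMono φ ∧ ∃ w : ℕ → Y, (∀ k, ι (w k) = v (φ k)) ∧
        ∃ y : Y, Tendsto w atTop (𝓝 y)

/-- The Hausdorff semidistance, measured in the metric of `Y`, from a set `C ⊆ X`
to a set `A ⊆ Y`.  A point `x ∈ C` which does not lie in (the image of) `Y`
contributes `∞`. -/
noncomputable def eSemidistY {X Y : Type*} [MetricSpace Y]
    (ι : Y → X) (C : Set X) (A : Set Y) : ℝ≥0∞ :=
  ⨆ x ∈ C, ⨅ y ∈ ι ⁻¹' {x}, EMetric.infEdist y A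

/-- `A ⊆ Y` attracts `B ⊆ X` : `dist_Y(S(t)B, A) → 0` as `t → ∞`. -/
def AttractsY {X Y : Type*} [MetricSpace X] [MetricSpace Y]
    (S : ℝ → X → Set X) (ι : Y → X) (A : Set Y) (B : Set X) : Prop :=
  Tendsto (fun t : ℝ => eSemidistY ι (mImage S t B) A) atTop (𝓝 0)

/-- `A ⊆ Y` is an `(X,Y)`-global attractor for `S`: it is nonempty, bounded and
compact in `Y`, it attracts every nonempty bounded subset of `X`, and it is
contained in every closed (in `Y`) set with this attraction property. -/
def IsGlobalAttractorXY {X Y : Type*} [MetricSpace X] [MetricSpace Y]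
    (S : ℝ → X → Set X) (ι : Y → X) (A : Set Y) : Prop :=
  A.Nonempty ∧ IsBounded A ∧ IsCompact A ∧
  (∀ B : Set X, B.Nonempty → IsBounded B → AttractsY S ι A B) ∧
  (∀ C : Set Y, IsClosed C →
    (∀ B : Set X, B.Nonempty → IsBounded B → AttractsY S ι C B) → A ⊆ C)

/-- The `ω`-limit set in `Y` of a set `B ⊆ X`, relative to a time `t₀ = t₀(B)`
after which `S(t)B ⊆ Y`: `ω_Y(B) = ⋂_{s ≥ t₀} cl_Y ( ⋃_{t ≥ s} S(t)B )`. -/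
def omegaY {X Y : Type*} [MetricSpace Y]
    (S : ℝ → X → Set X) (ι : Y → X) (B : Set X) (t₀ : ℝ) : Set Y :=
  ⋂ s ∈ Set.Ici t₀, closure (ι ⁻¹' (⋃ t ∈ Set.Ici s, mImage S t B))

/-- An eternal trajectory of the multivalued semiflow `S`:
`u(s) ∈ S(s - t)u(t)` for all `t ∈ ℝ`, `s > t`. -/
def IsEternalTrajectory {X : Type*} (S : ℝ → X → Set X) (u : ℝ → X) : Prop :=
  ∀ t s : ℝ, t < s → u s ∈ S (s - t) (u t)

/-!
Every point of `ω_Y(B₀)` is approximated, up to `1/(n+1)`, by a point of `S(t)B₀` with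
`t ≥ t₀ + n`. By asymptotic compactness these approximants have a subsequence converging in
`Y`, and then so do the original points; the limit lies in `ω_Y(B₀)` because it is closed.
-/

theorem isCompact_of_subset_closure_of_subseq_tendsto {Y : Type*} [MetricSpace Y]
    {K : Set Y} (hK : IsClosed K) (F : ℕ → Set Y) (hKF : ∀ n, K ⊆ closure (F n))
    (hF : ∀ z : ℕ → Y, (∀ n, z n ∈ F n) →
      ∃ a : Y, ∃ φ : ℕ → ℕ, StrictMono φ ∧ Tendsto (z ∘ φ) atTop (𝓝 a)) :
    IsCompact K := by
  rw [isCompact_iff_isSeqCompact]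
  intro y hy
  have happrox : ∀ n : ℕ, ∃ z ∈ F n, dist (y n) z < 1 / (n + 1) := fun n =>
    Metric.mem_closure_iff.mp (hKF n (hy n)) _ Nat.one_div_pos_of_nat
  choose z hzF hyz using happrox
  obtain ⟨a, φ, hφ, hza⟩ := hF z hzF
  have hdist : Tendsto (fun k => dist (z (φ k)) (y (φ k))) atTop (𝓝 0) := by
    refine squeeze_zero (fun _ => dist_nonneg)
      (fun k => (dist_comm _ _).trans_le (hyz (φ k)).le) ?_
    exact tendsto_one_div_add_atTop_nhds_zero_nat.comp hφ.tendsto_atTop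
  have hya : Tendsto (y ∘ φ) atTop (𝓝 a) := hza.congr_dist hdist
  exact ⟨a, hK.mem_of_tendsto hya (.of_forall fun k => hy (φ k)), φ, hφ, hya⟩

section OmegaLimit

variable {X Y : Type*} [MetricSpace Y] {S : ℝ → X → Set X} {ι : Y → X}

theorem isClosed_omegaY (B : Set X) (t₀ : ℝ) : IsClosed (omegaY S ι B t₀) :=
  isClosed_biInter fun _ _ => isClosed_closure

theorem omegaY_subset_closure {B : Set X} {t₀ s : ℝ} (hs : t₀ ≤ s) :
    omegaY S ι B t₀ ⊆ closure (ι ⁻¹' ⋃ t ∈ Ici s, mImage S t B) :=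
  fun _ hy => mem_iInter₂.mp hy s hs

theorem IsAsympCompactOn.exists_subseq_tendsto [MetricSpace X] {B₀ : Set Y}
    (hcomp : IsAsympCompactOn S ι B₀) (hι : Function.Injective ι) {τ : ℕ → ℝ} (hτ : Tendsto τ atTop atTop) {z : ℕ → Y}
    (hz : ∀ n, ι (z n) ∈ ⋃ t ∈ Ici (τ n), mImage S t (ι '' B₀)) :
    ∃ a : Y, ∃ φ : ℕ → ℕ, StrictMono φ ∧ Tendsto (z ∘ φ) atTop (𝓝 a) := by
  simp only [mem_iUnion, mem_Ici, exists_prop] at hz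
  choose t hτt hzt using hz
  have ht : Tendsto t atTop atTop := tendsto_atTop_mono hτt hτ
  obtain ⟨φ, hφ, w, hw, a, hwa⟩ := hcomp t ht (fun n => ι (z n)) hzt
  have hwz : w = z ∘ φ := funext fun k => hι (hw k)
  exact ⟨a, φ, hφ, hwz ▸ hwa⟩

end OmegaLimit

theorem omega_compact_general
    {X Y : Type*} [MetricSpace X] [MetricSpace Y]
    (ι : Y → X) (hι_inj : Function.Injective ι)
    (S : ℝ → X → Set X)
    (B₀ : Set Y)
    (hcomp : IsAsympCompactOn S ι B₀)
    (t₀ : ℝ) :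
    IsCompact (omegaY S ι (ι '' B₀) t₀) := by
  have hτ : Tendsto (fun n : ℕ => t₀ + n) atTop atTop :=
    tendsto_atTop_add_const_left _ _ tendsto_natCast_atTop_atTop
  exact isCompact_of_subset_closure_of_subseq_tendsto (isClosed_omegaY _ t₀)
    (fun n => ι ⁻¹' ⋃ t ∈ Ici (t₀ + n), mImage S t (ι '' B₀))
    (fun n => omegaY_subset_closure (le_add_of_nonneg_right n.cast_nonneg))
    (fun z hz => hcomp.exists_subseq_tendsto hι_inj hτ hz)

/-- **ω_Y(B₀) is compact in Y** for a dissipative, asymptotically compact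
multivalued eventual semiflow. -/
theorem omega_compact
    {X Y : Type*} [MetricSpace X] [MetricSpace Y]
    (ι : Y → X) (hι_cont : Continuous ι) (hι_inj : Function.Injective ι)
    (S : ℝ → X → Set X) (hS : IsEventualSemiflow S)
    (B₀ : Set Y) (hB₀ne : B₀.Nonempty) (hB₀bdd : IsBounded B₀)
    (hdiss : IsDissipativeInto S ι B₀)
    (hcomp : IsAsympCompactOn S ι B₀)
    (t₀ : ℝ) (ht₀ : 0 ≤ t₀)
    (ht₀Y : ∀ t ≥ t₀, mImage S t (ι '' B₀) ⊆ Set.range ι) :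
    IsCompact (omegaY S ι (ι '' B₀) t₀) :=
  omega_compact_general ι hι_inj S B₀ hcomp t₀
end

section
/- Let {S(t)}_{t≥0} be a multivalued eventual semiflow on X. Assume that {S(t)} is (X,Y)-dissipative with bounded set B₀ ∈ B(Y) and that {S(t)} is Y-asymptotically compact on B₀. Then ω_Y(B₀) attracts all bounded subsets of X: for every B ∈ B(X), lim_{t→∞} dist_Y(S(t)B, ω_Y(B₀)) = 0. -/
open Set Filter Topology Bornology ENNReal

/-!
After the absorption time `τ` of a bounded set `B`, the semiflow property and dissipativity give
`S(t)B ⊆ S(t - τ)B₀`, so it suffices that `ω_Y(B₀)` attracts `B₀` itself. If it did not, there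
would be times `tₙ → ∞` and points `xₙ ∈ S(tₙ)B₀` at `Y`-distance greater than some `ε > 0` from
`ω_Y(B₀)`; by asymptotic compactness a subsequence converges in `Y`, and its limit lies in
`ω_Y(B₀)`, a contradiction.
-/

section

variable {X Y : Type*}

theorem mImage_mono (S : ℝ → X → Set X) (t : ℝ) : Monotone (mImage S t) :=
  fun _ _ h => biUnion_subset_biUnion_left h

variable [MetricSpace Y]

theorem eSemidistY_mono (ι : Y → X) {C C' : Set X} (h : C ⊆ C') (A : Set Y) :
    eSemidistY ι C A ≤ eSemidistY ι C' A :=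
  biSup_mono fun _ hx => h hx

variable {S : ℝ → X → Set X} {ι : Y → X}

theorem exists_far_of_lt_eSemidistY {C : Set X} {A : Set Y}
    {ε : ℝ≥0∞} (h : ε < eSemidistY ι C A) :
    ∃ x ∈ C, ∀ y, ι y = x → ε < Metric.infEDist y A := by
  simp only [eSemidistY, lt_iSup_iff] at h
  obtain ⟨x, hxC, hx⟩ := h
  exact ⟨x, hxC, fun y hy => hx.trans_le (iInf₂_le y hy)⟩

theorem mem_omegaY_of_tendsto {A : Set X} {t : ℕ → ℝ} (ht : Tendsto t atTop atTop)
    {w : ℕ → Y} (hw : ∀ k, ι (w k) ∈ mImage S (t k) A) {y : Y} (hy : Tendsto w atTop (𝓝 y))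
    (t₀ : ℝ) : y ∈ omegaY S ι A t₀ := by
  simp only [omegaY, mem_iInter]
  intro s _
  refine mem_closure_of_tendsto hy ?_
  filter_upwards [ht.eventually_ge_atTop s] with k hk
  exact mem_biUnion (mem_Ici.mpr hk) (hw k)

variable [MetricSpace X]

theorem exists_seq_far_of_not_attractsY {A : Set Y} {B : Set X} (h : ¬ AttractsY S ι A B) :
    ∃ ε > 0, ∃ t : ℕ → ℝ, (∀ n : ℕ, (n : ℝ) ≤ t n) ∧ ∃ x : ℕ → X, (∀ n, x n ∈ mImage S (t n) B) ∧
      ∀ n y, ι y = x n → ε < Metric.infEDist y A := by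
  rw [AttractsY, ENNReal.tendsto_nhds_zero] at h
  push Not at h
  obtain ⟨ε, hε, hfreq⟩ := h
  rw [frequently_atTop] at hfreq
  choose t ht hlt using fun n : ℕ => hfreq n
  choose x hx hfar using fun n => exists_far_of_lt_eSemidistY (hlt n)
  exact ⟨ε, hε, t, ht, x, hx, hfar⟩

theorem IsAsympCompactOn.attractsY_omegaY {B₀ : Set Y} (hcomp : IsAsympCompactOn S ι B₀)
    (t₀ : ℝ) : AttractsY S ι (omegaY S ι (ι '' B₀) t₀) (ι '' B₀) := by
  by_contra h
  obtain ⟨ε, hε, t, ht, x, hx, hfar⟩ := exists_seq_far_of_not_attractsY h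
  have ht_top : Tendsto t atTop atTop := tendsto_atTop_mono ht tendsto_natCast_atTop_atTop
  obtain ⟨φ, hφ, w, hw, y, hy⟩ := hcomp t ht_top x hx
  have hyω : y ∈ omegaY S ι (ι '' B₀) t₀ :=
    mem_omegaY_of_tendsto (ht_top.comp hφ.tendsto_atTop) (fun k => (hw k).symm ▸ hx (φ k)) hy t₀
  have hclose : Tendsto (fun k => Metric.infEDist (w k) (omegaY S ι (ι '' B₀) t₀)) atTop (𝓝 0) :=
    Metric.infEDist_zero_of_mem hyω ▸ (Metric.continuous_infEDist.tendsto y).comp hy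
  obtain ⟨k, hk⟩ := (hclose.eventually (gt_mem_nhds hε)).exists
  exact (hfar (φ k) (w k) (hw k)).not_gt hk

theorem AttractsY.of_mImage_subset_shift {A : Set Y} {B B' : Set X} (h : AttractsY S ι A B')
    {τ : ℝ} (hsub : ∀ t ≥ τ, mImage S t B ⊆ mImage S (t - τ) B') : AttractsY S ι A B := by
  have hshift : Tendsto (fun t => eSemidistY ι (mImage S (t - τ) B') A) atTop (𝓝 0) :=
    h.comp (tendsto_atTop_add_const_right _ (-τ) tendsto_id)
  refine tendsto_of_tendsto_of_tendsto_of_le_of_le' tendsto_const_nhds hshift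
    (Eventually.of_forall fun _ => zero_le) ?_
  filter_upwards [eventually_ge_atTop τ] with t ht
  exact eSemidistY_mono ι (hsub t ht) A

theorem IsEventualSemiflow.exists_mImage_subset_shift {B₀ : Set Y} (hS : IsEventualSemiflow S)
    (hdiss : IsDissipativeInto S ι B₀) {B : Set X} (hB : B.Nonempty) (hBb : IsBounded B) :
    ∃ τ, ∀ t ≥ τ, mImage S t B ⊆ mImage S (t - τ) (ι '' B₀) := by
  obtain ⟨t₁, -, hsemi⟩ := hS.2.2 B hB hBb
  obtain ⟨t₂, -, habs⟩ := hdiss B hB hBb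
  refine ⟨max t₁ t₂, fun t ht => ?_⟩
  calc mImage S t B = mImage S (t - max t₁ t₂ + max t₁ t₂) B := by rw [sub_add_cancel]
    _ ⊆ mImage S (t - max t₁ t₂) (mImage S (max t₁ t₂) B) :=
      hsemi _ (le_max_left _ _) _ (sub_nonneg.mpr ht)
    _ ⊆ mImage S (t - max t₁ t₂) (ι '' B₀) := mImage_mono S _ (habs _ (le_max_right _ _))

end

theorem omega_attracts_general
    {X Y : Type*} [MetricSpace X] [MetricSpace Y]
    (ι : Y → X)
    (S : ℝ → X → Set X) (hS : IsEventualSemiflow S)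
    (B₀ : Set Y)
    (hdiss : IsDissipativeInto S ι B₀)
    (hcomp : IsAsympCompactOn S ι B₀)
    (t₀ : ℝ) :
    ∀ B : Set X, B.Nonempty → IsBounded B →
      AttractsY S ι (omegaY S ι (ι '' B₀) t₀) B := by
  intro B hB hBb
  obtain ⟨τ, hτ⟩ := hS.exists_mImage_subset_shift hdiss hB hBb
  exact (hcomp.attractsY_omegaY t₀).of_mImage_subset_shift hτ

/-- **ω_Y(B₀) attracts all bounded subsets of X**: for every nonempty bounded
`B ⊆ X`, `dist_Y(S(t)B, ω_Y(B₀)) → 0` as `t → ∞`. -/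
theorem omega_attracts
    {X Y : Type*} [MetricSpace X] [MetricSpace Y]
    (ι : Y → X) (hι_cont : Continuous ι) (hι_inj : Function.Injective ι)
    (S : ℝ → X → Set X) (hS : IsEventualSemiflow S)
    (B₀ : Set Y) (hB₀ne : B₀.Nonempty) (hB₀bdd : IsBounded B₀)
    (hdiss : IsDissipativeInto S ι B₀)
    (hcomp : IsAsympCompactOn S ι B₀)
    (t₀ : ℝ) (ht₀ : 0 ≤ t₀)
    (ht₀Y : ∀ t ≥ t₀, mImage S t (ι '' B₀) ⊆ Set.range ι) :
    ∀ B : Set X, B.Nonempty → IsBounded B →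
      AttractsY S ι (omegaY S ι (ι '' B₀) t₀) B :=
  omega_attracts_general ι S hS B₀ hdiss hcomp t₀
end

section
/- Let {S(t)}_{t≥0} be a multivalued eventual semiflow on X which is (X,Y)-dissipative with bounded set B₀ ∈ B(Y) and Y-asymptotically compact on B₀, and let A be its (X,Y)-global attractor. Assume in addition that for every t ≥ 0 the restriction S(t)|_Y is single-valued with S(t)Y ⊂ Y, the family {S(t)|_Y}_{t≥0} is a semigroup on Y, and each S(t)|_Y : Y → Y is continuous. Then the attractor A is invariant: S(t)A = A for every t ≥ 0. -/
open Set Filter Topology Bornology ENNReal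

/-!
`T t '' A` is compact and attracts every bounded set: after the absorbing time, `S(τ)B` is
contained in `S(t)S(τ - t)B`, where `S(τ - t)B` already lies in `Y` close to `A`, and `T t` is
uniformly continuous near the compact set `A`. Minimality of the attractor gives
`A ⊆ T t '' A`. Conversely, by the semigroup law each point `T t a` lies in `S(τ)A` for every
`τ ≥ t`, so attraction of the bounded set `A` by itself puts `T t a` in the closed set `A`.
-/

theorem Metric.exists_pos_forall_infEDist_image_lt {Y Z : Type*} [PseudoEMetricSpace Y]
    [PseudoEMetricSpace Z] {f : Y → Z} (hf : Continuous f) {K : Set Y} (hK : IsCompact K)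
    {ε : ℝ≥0∞} (hε : 0 < ε) :
    ∃ δ > 0, ∀ y, Metric.infEDist y K < δ → Metric.infEDist (f y) (f '' K) < ε := by
  have hopen : IsOpen {y | Metric.infEDist (f y) (f '' K) < ε} :=
    isOpen_lt (Metric.continuous_infEDist.comp hf) continuous_const
  have hK_sub : K ⊆ {y | Metric.infEDist (f y) (f '' K) < ε} := fun y hy => by
    simpa only [mem_ofPred_eq, Metric.infEDist_zero_of_mem (mem_image_of_mem f hy)] using hε
  obtain ⟨δ, hδ, hsub⟩ := hK.exists_thickening_subset_open hopen hK_sub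
  exact ⟨ENNReal.ofReal δ, ENNReal.ofReal_pos.2 hδ, fun y hy =>
    hsub (Metric.mem_thickening_iff_infEDist_lt.2 hy)⟩

section
variable {X Y : Type*}

theorem mImage_image_eq {S : ℝ → X → Set X} {ι : Y → X} {t : ℝ} {f : Y → Y}
    (hSf : ∀ y, S t (ι y) = {ι (f y)}) (D : Set Y) :
    mImage S t (ι '' D) = ι '' (f '' D) := by
  simp only [mImage, biUnion_image, hSf, image_image]
  ext x
  simp [eq_comm]

variable [MetricSpace Y] {ι : Y → X}

theorem eSemidistY_mono_left {C C' : Set X} (h : C ⊆ C') (A : Set Y) :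
    eSemidistY ι C A ≤ eSemidistY ι C' A :=
  biSup_mono h

theorem eSemidistY_image (hι : Function.Injective ι) (D A : Set Y) :
    eSemidistY ι (ι '' D) A = ⨆ y ∈ D, Metric.infEDist y A := by
  have hfiber : ∀ y, ι ⁻¹' {ι y} = {y} := fun y => by ext; simp [hι.eq_iff]
  rw [eSemidistY, iSup_image]
  simp only [hfiber, mem_singleton_iff, iInf_iInf_eq_left]
  -- `EMetric.infEdist`, used by `eSemidistY`, is a deprecated alias of `Metric.infEDist`.
  rfl

theorem infEDist_le_eSemidistY (hι : Function.Injective ι) {C : Set X} {y : Y}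
    (hy : ι y ∈ C) (A : Set Y) : Metric.infEDist y A ≤ eSemidistY ι C A :=
  calc Metric.infEDist y A ≤ eSemidistY ι (ι '' {y}) A := by
        rw [eSemidistY_image hι, iSup_singleton]
    _ ≤ eSemidistY ι C A := eSemidistY_mono_left (by simpa using hy) A

variable [MetricSpace X] {S : ℝ → X → Set X} {A : Set Y} {B : Set X}

theorem AttractsY.mem_closure (hι : Function.Injective ι) (hAB : AttractsY S ι A B) {y : Y}
    (hy : ∀ᶠ τ in atTop, ι y ∈ mImage S τ B) : y ∈ closure A := by
  have hle : ∀ᶠ τ in atTop, Metric.infEDist y A ≤ eSemidistY ι (mImage S τ B) A :=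
    hy.mono fun τ hτ => infEDist_le_eSemidistY hι hτ A
  exact Metric.mem_closure_iff_infEDist_zero.2 <|
    nonpos_iff_eq_zero.1 (ge_of_tendsto hAB hle)

theorem AttractsY.image {B₀ : Set Y} (hS : IsEventualSemiflow S)
    (hdiss : IsDissipativeInto S ι B₀) (hι : Function.Injective ι) (hA : IsCompact A) (hB : B.Nonempty) (hBb : IsBounded B)
    (hAB : AttractsY S ι A B) {t : ℝ} (ht : 0 ≤ t) {f : Y → Y} (hf : Continuous f)
    (hSf : ∀ y, S t (ι y) = {ι (f y)}) : AttractsY S ι (f '' A) B := by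
  obtain ⟨t₁, -, hsemi⟩ := hS.2.2 B hB hBb
  obtain ⟨t₀, -, habs⟩ := hdiss B hB hBb
  refine ENNReal.tendsto_nhds_zero.2 fun ε hε => ?_
  obtain ⟨δ, hδ, hfδ⟩ := Metric.exists_pos_forall_infEDist_image_lt hf hA hε
  have hclose : ∀ᶠ τ in atTop, eSemidistY ι (mImage S (τ - t) B) A < δ :=
    (hAB.comp (tendsto_atTop_add_const_right _ (-t) tendsto_id)).eventually (gt_mem_nhds hδ)
  filter_upwards [hclose, eventually_ge_atTop (t + max t₀ t₁)] with τ hτδ hτ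
  set D := ι ⁻¹' mImage S (τ - t) B
  have hD : ι '' D = mImage S (τ - t) B :=
    image_preimage_eq_of_subset ((habs _ (by grind)).trans (image_subset_range ι B₀))
  have hstep : mImage S τ B ⊆ ι '' (f '' D) := by
    rw [← mImage_image_eq hSf, hD]
    simpa using hsemi (τ - t) (by grind) t ht
  calc eSemidistY ι (mImage S τ B) (f '' A)
      ≤ eSemidistY ι (ι '' (f '' D)) (f '' A) := eSemidistY_mono_left hstep _
    _ = ⨆ y ∈ D, Metric.infEDist (f y) (f '' A) := by
        rw [eSemidistY_image hι, iSup_image]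
    _ ≤ ε := iSup₂_le fun y hy =>
        (hfδ y ((infEDist_le_eSemidistY hι hy A).trans_lt hτδ)).le

end

theorem attractor_invariance_general
    {X Y : Type*} [MetricSpace X] [MetricSpace Y]
    (ι : Y → X) (hι_cont : Continuous ι) (hι_inj : Function.Injective ι)
    (S : ℝ → X → Set X) (hS : IsEventualSemiflow S)
    (B₀ : Set Y)
    (hdiss : IsDissipativeInto S ι B₀)
    (A : Set Y) (hA : IsGlobalAttractorXY S ι A)
    (T : ℝ → Y → Y)
    (hT : ∀ t ≥ (0 : ℝ), ∀ y : Y, S t (ι y) = {ι (T t y)})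
    (hTsemi : ∀ t ≥ (0 : ℝ), ∀ s ≥ (0 : ℝ), ∀ y : Y, T (t + s) y = T t (T s y))
    (hTcont : ∀ t ≥ (0 : ℝ), Continuous (T t)) :
    ∀ t ≥ (0 : ℝ), mImage S t (ι '' A) = ι '' A := by
  obtain ⟨-, -, hAc, hattr, hmin⟩ := hA
  have hA_sub : ∀ s ≥ (0 : ℝ), A ⊆ T s '' A := fun s hs =>
    hmin _ (hAc.image (hTcont s hs)).isClosed fun B hB hBb =>
      (hattr B hB hBb).image hS hdiss hι_inj hAc hB hBb hs (hTcont s hs) (hT s hs)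
  intro t ht
  have hsub_A : T t '' A ⊆ A := by
    rintro _ ⟨a, ha, rfl⟩
    rw [← hAc.isClosed.closure_eq]
    refine (hattr _ ((nonempty_of_mem ha).image ι) (hAc.image hι_cont).isBounded).mem_closure
      hι_inj ?_
    filter_upwards [eventually_ge_atTop t] with τ hτ
    obtain ⟨b, hb, rfl⟩ := hA_sub (τ - t) (sub_nonneg.2 hτ) ha
    rw [← hTsemi t ht _ (sub_nonneg.2 hτ), add_sub_cancel, mImage_image_eq (hT τ (ht.trans hτ))]
    exact mem_image_of_mem ι (mem_image_of_mem _ hb)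
  rw [mImage_image_eq (hT t ht), hsub_A.antisymm (hA_sub t ht)]

/-- **Invariance of the global attractor.**  If, in addition, for every `t ≥ 0` the
restriction of `S(t)` to `Y` is single-valued (given by a map `T t : Y → Y`),
the family `{T t}` is a semigroup on `Y`, and each `T t` is continuous, then the
`(X,Y)`-global attractor `𝓐` is invariant: `S(t)𝓐 = 𝓐` for every `t ≥ 0`. -/
theorem attractor_invariance
    {X Y : Type*} [MetricSpace X] [MetricSpace Y]
    (ι : Y → X) (hι_cont : Continuous ι) (hι_inj : Function.Injective ι)
    (S : ℝ → X → Set X) (hS : IsEventualSemiflow S)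
    (B₀ : Set Y) (hB₀ne : B₀.Nonempty) (hB₀bdd : IsBounded B₀)
    (hdiss : IsDissipativeInto S ι B₀)
    (hcomp : IsAsympCompactOn S ι B₀)
    (A : Set Y) (hA : IsGlobalAttractorXY S ι A)
    (T : ℝ → Y → Y)
    (hT : ∀ t ≥ (0 : ℝ), ∀ y : Y, S t (ι y) = {ι (T t y)})
    (hTsemi : ∀ t ≥ (0 : ℝ), ∀ s ≥ (0 : ℝ), ∀ y : Y, T (t + s) y = T t (T s y))
    (hTcont : ∀ t ≥ (0 : ℝ), Continuous (T t)) :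
    ∀ t ≥ (0 : ℝ), mImage S t (ι '' A) = ι '' A :=
  attractor_invariance_general ι hι_cont hι_inj S hS B₀ hdiss A hA T hT hTsemi hTcont
end

section
/- Let {S(t)}_{t≥0} be a multivalued eventual semiflow on X which is (X,Y)-dissipative with bounded set B₀ ∈ B(Y). Then every eternal X-bounded trajectory u : ℝ → X satisfies u(t) ∈ B₀ for every t ∈ ℝ; in particular, u is Y-bounded. -/
open Set Filter Topology Bornology ENNReal

/- An eternal trajectory passes through every point `u τ` after running for time `T > 0` from
`u (τ - T)`, so its range is contained in `S(T)(range u)` for all `T > 0`; if the range is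
bounded, dissipativity puts `S(T)(range u)`, hence the whole range, inside `B₀` for large `T`. -/

theorem IsEternalTrajectory.mem_mImage_range {X : Type*} {S : ℝ → X → Set X} {u : ℝ → X}
    (hu : IsEternalTrajectory S u) {T : ℝ} (hT : 0 < T) (τ : ℝ) :
    u τ ∈ mImage S T (range u) :=
  mem_iUnion₂.2 ⟨u (τ - T), mem_range_self _, by
    simpa using hu (τ - T) τ (sub_lt_self τ hT)⟩

theorem IsEternalTrajectory.mem_image_of_isDissipativeInto {X Y : Type*} [MetricSpace X]
    [MetricSpace Y] {S : ℝ → X → Set X} {ι : Y → X} {B₀ : Set Y} {u : ℝ → X}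
    (hu : IsEternalTrajectory S u) (hbdd : IsBounded (range u))
    (hdiss : IsDissipativeInto S ι B₀) (τ : ℝ) :
    u τ ∈ ι '' B₀ := by
  obtain ⟨t₀, ht₀, habs⟩ := hdiss (range u) (range_nonempty u) hbdd
  exact habs (t₀ + 1) (by linarith) (hu.mem_mImage_range (by linarith) τ)

theorem exists_isBounded_range_lift_of_forall_mem_image {ι X Y : Type*} [Bornology Y]
    {f : Y → X} {B : Set Y} (hB : IsBounded B) {u : ι → X} (hu : ∀ t, u t ∈ f '' B) :
    ∃ w : ι → Y, (∀ t, f (w t) = u t) ∧ IsBounded (range w) := by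
  choose w hwB hw using hu
  exact ⟨w, hw, hB.subset (range_subset_iff.2 hwB)⟩

theorem eternal_trajectory_in_absorbing_general
    {X Y : Type*} [MetricSpace X] [MetricSpace Y]
    (ι : Y → X)
    (S : ℝ → X → Set X)
    (B₀ : Set Y) (hB₀bdd : IsBounded B₀)
    (hdiss : IsDissipativeInto S ι B₀) :
    ∀ u : ℝ → X, IsEternalTrajectory S u → IsBounded (Set.range u) →
      (∀ t : ℝ, u t ∈ ι '' B₀) ∧
      ∃ w : ℝ → Y, (∀ t : ℝ, ι (w t) = u t) ∧ IsBounded (Set.range w) := by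
  intro u hu hbdd
  have hmem : ∀ t, u t ∈ ι '' B₀ := hu.mem_image_of_isDissipativeInto hbdd hdiss
  exact ⟨hmem, exists_isBounded_range_lift_of_forall_mem_image hB₀bdd hmem⟩

/-- **Eternal bounded trajectories lie in the absorbing set.**  If `S` is an
`(X,Y)`-dissipative multivalued eventual semiflow with bounded absorbing set
`B₀ ∈ 𝓑(Y)`, then every eternal `X`-bounded trajectory `u : ℝ → X` satisfies
`u(t) ∈ B₀` for every `t ∈ ℝ`; in particular `u` is `Y`-bounded. -/
theorem eternal_trajectory_in_absorbing
    {X Y : Type*} [MetricSpace X] [MetricSpace Y]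
    (ι : Y → X) (hι_cont : Continuous ι) (hι_inj : Function.Injective ι)
    (S : ℝ → X → Set X) (hS : IsEventualSemiflow S)
    (B₀ : Set Y) (hB₀ne : B₀.Nonempty) (hB₀bdd : IsBounded B₀)
    (hdiss : IsDissipativeInto S ι B₀) :
    ∀ u : ℝ → X, IsEternalTrajectory S u → IsBounded (Set.range u) →
      (∀ t : ℝ, u t ∈ ι '' B₀) ∧
      ∃ w : ℝ → Y, (∀ t : ℝ, ι (w t) = u t) ∧ IsBounded (Set.range w) :=
  eternal_trajectory_in_absorbing_general ι S B₀ hB₀bdd hdiss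
end
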